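/- arXiv:1406.7017 — 7 statements merged into one kernel-verified Lean document; each statement's English description precedes it below -/
import Mathlib

section
/- Let k ≥ 2, r ≥ 1 and M ≥ 1 be integers and set n = k·M^r. For 0 ≤ i ≤ r let m_i = M^i, let w_i be the word (1^{m_i} 2^{m_i} ⋯ k^{m_i})^{n/(k·m_i)} of length n over the alphabet [k], and let rev(w_r) be the reversal of w_r. Then for the family W = {w_0, w_1, …, w_r, rev(w_r), 1^n, 2^n, …, k^n} of k+r+2 words, every two distinct words of W have longest common subsequence of length at most n/k + k·M^{r−1} (that is, at most n/k + k^{1/r}·n^{1−1/r}). -/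
/-!
Cut a common subsequence of two concatenations `u₁ ⋯ u_p` and `v₁ ⋯ v_q` at the piece
boundaries of both words: each fragment is a common subsequence of some `u_a` and `v_b`, and the
index pairs `(a, b)` of consecutive fragments move monotonically, so there are at most `p + q`
fragments. Hence if every `u_a` and `v_b` have LCS at most `m`, the concatenations have LCS at most
`m (p + q)`. For `i < j`, cut `w_i` into its `M^{r-i}` periods and `w_j` (or `rev w_r`) into its
`k M^{r-j}` runs `a^{M^j}`; a period and a run have LCS at most `M^i`, giving the bound
`M^r + k M^{r-j+i} ≤ n/k + k M^{r-1}`. The other pairs are settled by counting: a common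
subsequence of `a^n` and `v` is no longer than the number of `a`s in `v` (at most `n/k`), and a
common subsequence of the sorted word `w_r` and its reversal is both nondecreasing and
nonincreasing, hence constant.
-/

/-- The word `(1^m 2^m ⋯ k^m)^q` over the alphabet `Fin k` (letters `0,…,k-1` standing for
`1,…,k`): `q` concatenated copies of the block `1^m 2^m ⋯ k^m`. -/
def periodicWord (k m q : ℕ) : List (Fin k) :=
  (List.replicate q ((List.finRange k).flatMap fun a => List.replicate m a)).flatten

open List

section LCS

variable {α : Type*}

def LcsLE (u v : List α) (m : ℕ) : Prop :=
  ∀ s : List α, s <+ u → s <+ v → s.length ≤ m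

namespace LcsLE

variable {u v : List α} {m : ℕ}

theorem symm (h : LcsLE u v m) : LcsLE v u m := fun s hv hu => h s hu hv

theorem mono (h : LcsLE u v m) {m' : ℕ} (hm : m ≤ m') : LcsLE u v m' :=
  fun s hu hv => (h s hu hv).trans hm

theorem flatten (us vs : List (List α)) (h : ∀ u ∈ us, ∀ v ∈ vs, LcsLE u v m) :
    LcsLE us.flatten vs.flatten (m * (us.length + vs.length)) := by
  intro s hs hs'
  match us, vs with
  | [], _ => simp_all
  | _, [] => simp_all
  | u :: us, v :: vs =>
    obtain ⟨x, y, rfl, hx, hy⟩ := sublist_append_iff.1 hs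
    obtain ⟨x', y', he, hx', hy'⟩ := sublist_append_iff.1 hs'
    rcases append_eq_append_iff.1 he with ⟨z, rfl, rfl⟩ | ⟨z, rfl, rfl⟩
    · have hxv := h u (by simp) v (by simp) x hx ((sublist_append_left x z).trans hx')
      have hyv := flatten us (v :: vs) (fun u' hu' => h u' (by simp [hu'])) (z ++ y') hy
        (((sublist_append_right x z).trans hx').append hy')
      simp only [length_append, length_cons] at hyv ⊢
      linarith
    · have hxu := h u (by simp) v (by simp) x' ((sublist_append_left x' z).trans hx) hx'
      have hyu := flatten (u :: us) vs (fun u' hu' v' hv' => h u' hu' v' (by simp [hv'])) (z ++ y)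
        (((sublist_append_right x' z).trans hx).append hy) hy'
      simp only [length_append, length_cons] at hyu ⊢
      linarith
termination_by us.length + vs.length

theorem replicate_left [DecidableEq α] (n : ℕ) (a : α) (v : List α) :
    LcsLE (replicate n a) v (v.count a) := by
  intro s hs hv
  obtain ⟨t, -, rfl⟩ := sublist_replicate_iff.1 hs
  simpa using replicate_sublist_iff.1 hv

theorem reverse_of_pairwise_le [PartialOrder α] [DecidableEq α]
    (hu : u.Pairwise (· ≤ ·)) (hm : ∀ a, u.count a ≤ m) : LcsLE u u.reverse m := by
  rintro (_ | ⟨a, t⟩) hs hs'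
  · simp
  have hle : (a :: t).Pairwise (· ≤ ·) := hu.sublist hs
  have hge : (a :: t).reverse.Pairwise (· ≤ ·) := hu.sublist (by simpa using hs'.reverse)
  rw [pairwise_reverse] at hge
  have hconst : a :: t = replicate (a :: t).length a := by
    refine eq_replicate_iff.2 ⟨rfl, fun b hb => ?_⟩
    rcases mem_cons.1 hb with rfl | hb
    · rfl
    · exact le_antisymm (rel_of_pairwise_cons hge hb) (rel_of_pairwise_cons hle hb)
  rw [hconst] at hs
  exact (replicate_sublist_iff.1 hs).trans (hm a)

end LcsLE

end LCS

section PeriodicWord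

variable {k : ℕ}

theorem count_periodicWord (m q : ℕ) (a : Fin k) : (periodicWord k m q).count a = q * m := by
  simp [periodicWord, count_flatten, count_flatMap, Function.comp_def, count_replicate,
    ← Fin.sum_univ_def]

theorem periodicWord_one_pairwise_le (m : ℕ) : (periodicWord k m 1).Pairwise (· ≤ ·) := by
  rw [periodicWord, replicate_one, flatten_singleton, pairwise_flatMap]
  refine ⟨fun a _ => pairwise_replicate.2 (Or.inr le_rfl),
    (pairwise_lt_finRange k).imp fun hab x hx y hy => ?_⟩
  rw [eq_of_mem_replicate hx, eq_of_mem_replicate hy]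
  exact hab.le

theorem periodicWord_eq_flatten_runs (m q : ℕ) :
    periodicWord k m q = ((replicate q (finRange k)).flatten.map (replicate m ·)).flatten := by
  simp [periodicWord, flatMap_def, map_flatten, flatten_flatten, map_replicate]

theorem lcsLE_periodicWord_flatten_runs {m m' : ℕ} (q : ℕ) {vs : List (List (Fin k))}
    (hvs : ∀ v ∈ vs, ∃ a, v = replicate m' a) :
    LcsLE (periodicWord k m q) vs.flatten (m * (q + vs.length)) := by
  have hperiod : ∀ v ∈ vs, LcsLE (periodicWord k m 1) v m := fun v hv => by
    obtain ⟨a, rfl⟩ := hvs v hv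
    simpa [count_periodicWord] using (LcsLE.replicate_left m' a (periodicWord k m 1)).symm
  have hperiods : periodicWord k m q = (replicate q (periodicWord k m 1)).flatten := by
    simp [periodicWord]
  simpa [hperiods] using LcsLE.flatten (replicate q (periodicWord k m 1)) vs fun u hu =>
    eq_of_mem_replicate hu ▸ hperiod

theorem lcsLE_periodicWord (m q m' q' : ℕ) :
    LcsLE (periodicWord k m q) (periodicWord k m' q') (m * (q + q' * k)) := by
  have h := lcsLE_periodicWord_flatten_runs (m := m) (m' := m') q
    (vs := (replicate q' (finRange k)).flatten.map (replicate m' ·)) fun v hv => by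
      obtain ⟨a, -, rfl⟩ := mem_map.1 hv
      exact ⟨a, rfl⟩
  rw [← periodicWord_eq_flatten_runs] at h
  simpa using h

theorem lcsLE_periodicWord_reverse (m q m' q' : ℕ) :
    LcsLE (periodicWord k m q) (periodicWord k m' q').reverse (m * (q + q' * k)) := by
  have hrev : (periodicWord k m' q').reverse =
      ((replicate q' (finRange k)).flatten.map (replicate m' ·)).reverse.flatten := by
    simp [periodicWord_eq_flatten_runs m' q', reverse_flatten, Function.comp_def]
  have h := lcsLE_periodicWord_flatten_runs (m := m) (m' := m') q
    (vs := ((replicate q' (finRange k)).flatten.map (replicate m' ·)).reverse) fun v hv => by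
      obtain ⟨a, -, rfl⟩ := mem_map.1 (mem_reverse.1 hv)
      exact ⟨a, rfl⟩
  rw [← hrev] at h
  simpa using h

end PeriodicWord

section Family

variable {k M r : ℕ}

theorem count_periodicWord_pow {i : ℕ} (hi : i ≤ r) (a : Fin k) :
    (periodicWord k (M ^ i) (M ^ (r - i))).count a = M ^ r := by
  rw [count_periodicWord, ← pow_add, Nat.sub_add_cancel hi]

theorem pow_mul_add_le (hM : 1 ≤ M) {i j : ℕ} (hij : i < j) (hj : j ≤ r) :
    M ^ i * (M ^ (r - i) + M ^ (r - j) * k) ≤ M ^ r + k * M ^ (r - 1) := by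
  calc M ^ i * (M ^ (r - i) + M ^ (r - j) * k) = M ^ r + k * M ^ (r - j + i) := by
        rw [mul_add, ← pow_add, Nat.add_sub_cancel' (by omega)]
        ring
    _ ≤ M ^ r + k * M ^ (r - 1) := by
        gcongr
        omega

theorem lcsLE_periodicWord_pow (hM : 1 ≤ M) {i j : ℕ} (hij : i ≠ j) (hi : i ≤ r) (hj : j ≤ r) :
    LcsLE (periodicWord k (M ^ i) (M ^ (r - i))) (periodicWord k (M ^ j) (M ^ (r - j)))
      (M ^ r + k * M ^ (r - 1)) := by
  rcases hij.lt_or_gt with hij | hji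
  · exact (lcsLE_periodicWord _ _ _ _).mono (pow_mul_add_le hM hij hj)
  · exact ((lcsLE_periodicWord _ _ _ _).mono (pow_mul_add_le hM hji hi)).symm

theorem lcsLE_periodicWord_pow_reverse (hM : 1 ≤ M) {i : ℕ} (hi : i ≤ r) :
    LcsLE (periodicWord k (M ^ i) (M ^ (r - i))) (periodicWord k (M ^ r) 1).reverse
      (M ^ r + k * M ^ (r - 1)) := by
  rcases hi.lt_or_eq with hi | rfl
  · simpa using (lcsLE_periodicWord_reverse (M ^ i) (M ^ (r - i)) (M ^ r) (M ^ (r - r))).mono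
      (pow_mul_add_le hM hi le_rfl)
  · rw [Nat.sub_self, pow_zero]
    refine (LcsLE.reverse_of_pairwise_le (periodicWord_one_pairwise_le _) fun a => ?_).mono
      (Nat.le_add_right _ _)
    simp [count_periodicWord]

end Family

theorem lcs_upper_bound_family_general (k r M n : ℕ) (hk : 2 ≤ k) (hM : 1 ≤ M)
    (hn : n = k * M ^ r)
    (W : Set (List (Fin k)))
    (hW : W = {w | (∃ i ≤ r, w = periodicWord k (M ^ i) (n / (k * M ^ i))) ∨
                   w = (periodicWord k (M ^ r) (n / (k * M ^ r))).reverse ∨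
                   (∃ a : Fin k, w = List.replicate n a)}) :
    ∀ u ∈ W, ∀ v ∈ W, u ≠ v →
      ∀ s : List (Fin k), s.Sublist u → s.Sublist v →
        s.length ≤ n / k + k * M ^ (r - 1) := by
  subst hW hn
  have hq : ∀ i ≤ r, k * M ^ r / (k * M ^ i) = M ^ (r - i) := fun i hi => by
    rw [← Nat.sub_add_cancel hi, pow_add, Nat.add_sub_cancel, mul_comm (M ^ (r - i)),
      ← mul_assoc, Nat.mul_div_cancel_left _ (Nat.mul_pos (by omega) (Nat.one_le_pow _ _ hM))]
  have hnk : k * M ^ r / k = M ^ r := Nat.mul_div_cancel_left _ (by omega)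
  have hcount : ∀ a : Fin k, (periodicWord k (M ^ r) 1).reverse.count a = M ^ r := fun a => by
    simp [count_periodicWord]
  rintro u hu v hv huv
  rw [hnk]
  rcases hu with ⟨i, hi, rfl⟩ | rfl | ⟨a, rfl⟩ <;> rcases hv with ⟨j, hj, rfl⟩ | rfl | ⟨b, rfl⟩
  all_goals try simp (disch := omega) only [hq, Nat.sub_self, pow_zero] at huv ⊢
  · exact lcsLE_periodicWord_pow hM (fun h => huv (h ▸ rfl)) hi hj
  · exact lcsLE_periodicWord_pow_reverse hM hi
  · exact ((LcsLE.replicate_left _ b _).symm.mono (count_periodicWord_pow hi b).le).mono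
      (Nat.le_add_right _ _)
  · exact (lcsLE_periodicWord_pow_reverse hM hj).symm
  · exact absurd rfl huv
  · exact ((LcsLE.replicate_left _ b _).symm.mono (hcount b).le).mono (Nat.le_add_right _ _)
  · exact ((LcsLE.replicate_left _ a _).mono (count_periodicWord_pow hj a).le).mono
      (Nat.le_add_right _ _)
  · exact ((LcsLE.replicate_left _ a _).mono (hcount a).le).mono (Nat.le_add_right _ _)
  · have hba : b ≠ a := fun h => huv (h ▸ rfl)
    exact (LcsLE.replicate_left _ a _).mono (by simp [count_replicate, hba])

/-- Let `k ≥ 2`, `r ≥ 1`, `M ≥ 1` and `n = k·M^r`.  For `0 ≤ i ≤ r` let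
`m_i = M^i` and `w_i = (1^{m_i} 2^{m_i} ⋯ k^{m_i})^{n/(k·m_i)}`.  Then for the family
`W = {w_0, …, w_r, rev(w_r), 1^n, …, k^n}` of `k + r + 2` words, every two distinct words of
`W` have longest common subsequence of length at most `n/k + k·M^{r-1}`
(that is, at most `n/k + k^{1/r}·n^{1-1/r}`). -/
theorem lcs_upper_bound_family (k r M n : ℕ) (hk : 2 ≤ k) (hr : 1 ≤ r) (hM : 1 ≤ M)
    (hn : n = k * M ^ r)
    (W : Set (List (Fin k)))
    (hW : W = {w | (∃ i ≤ r, w = periodicWord k (M ^ i) (n / (k * M ^ i))) ∨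
                   w = (periodicWord k (M ^ r) (n / (k * M ^ r))).reverse ∨
                   (∃ a : Fin k, w = List.replicate n a)}) :
    ∀ u ∈ W, ∀ v ∈ W, u ≠ v →
      ∀ s : List (Fin k), s.Sublist u → s.Sublist v →
        s.length ≤ n / k + k * M ^ (r - 1) :=
  lcs_upper_bound_family_general k r M n hk hM hn W hW
end

section
/- Let k ≥ 2, r ≥ 1 and M ≥ 1 be integers and set n = k·M^r. For 0 ≤ i ≤ r let m_i = M^i and let w_i be the word (1^{m_i} 2^{m_i} ⋯ k^{m_i})^{n/(k·m_i)} of length n over the alphabet [k], and let rev(w_r) be the reversal of w_r. Each word in the family {w_0, w_1, …, w_r, rev(w_r)} is balanced, and every two distinct words of this family have longest common subsequence of length at most n/k + k·M^{r−1} (that is, at most n/k + k^{1/r}·n^{1−1/r}). -/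
namespace List

variable {α : Type*}

def stretch (L : List α) (m : ℕ) : List α := L.flatMap (replicate m)

def periodic (L : List α) (m q : ℕ) : List α := (replicate q (L.stretch m)).flatten

@[simp] lemma stretch_cons (c : α) (L : List α) (m : ℕ) :
    (c :: L).stretch m = replicate m c ++ L.stretch m := rfl

lemma mem_of_mem_stretch {L : List α} {m : ℕ} {x : α} (hx : x ∈ L.stretch m) : x ∈ L := by
  obtain ⟨c, hc, hxc⟩ := mem_flatMap.1 hx
  rwa [eq_of_mem_replicate hxc]

lemma reverse_stretch (L : List α) (m : ℕ) : (L.stretch m).reverse = L.reverse.stretch m := by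
  simp [stretch, reverse_flatMap, Function.comp_def]

lemma periodic_succ (L : List α) (m q : ℕ) :
    L.periodic m (q + 1) = L.stretch m ++ L.periodic m q := by
  simp [periodic, replicate_succ]

lemma periodic_one (L : List α) (m : ℕ) : L.periodic m 1 = L.stretch m := by
  simp [periodic]

lemma length_periodic (L : List α) (m q : ℕ) : (L.periodic m q).length = q * (L.length * m) := by
  simp [periodic, stretch, length_flatMap, sum_replicate]

lemma pairwise_stretch [Preorder α] {L : List α} (m : ℕ) (hL : L.Pairwise (· ≤ ·)) :
    (L.stretch m).Pairwise (· ≤ ·) := by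
  refine pairwise_flatMap.2 ⟨fun c _ => pairwise_replicate.2 (Or.inr le_rfl), hL.imp ?_⟩
  intro a b hab x hx y hy
  rw [eq_of_mem_replicate hx, eq_of_mem_replicate hy]
  exact hab

section Runs

variable [DecidableEq α]

/-- The number of maximal constant blocks of consecutive letters. -/
def runs : List α → ℕ
  | [] => 0
  | a :: l => runs l + if l.head? = some a then 0 else 1

@[simp] lemma runs_nil : runs ([] : List α) = 0 := rfl

lemma runs_cons (a : α) (l : List α) :
    runs (a :: l) = runs l + if l.head? = some a then 0 else 1 := rfl

/-- Concatenation merges the last run of `x` with the first run of `y` exactly when they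
carry the same letter. -/
lemma runs_append (x y : List α) :
    runs (x ++ y) + (if y ≠ [] ∧ x.getLast? = y.head? then 1 else 0) = runs x + runs y := by
  induction x with
  | nil => cases y <;> simp [runs]
  | cons a x ih =>
    cases x with
    | nil =>
      cases y with
      | nil => rfl
      | cons c y =>
        rw [singleton_append, runs_cons, getLast?_singleton, head?_cons]
        rcases eq_or_ne c a with rfl | h
        · simp [runs_cons c [], add_comm]
        · simp [h, h.symm, runs_cons a [], add_comm]
    | cons b x =>
      have hhead : (b :: x ++ y).head? = some b := rfl
      rw [cons_append, runs_cons, runs_cons a, getLast?_cons_cons, hhead, head?_cons]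
      omega

lemma runs_append_le (x y : List α) : runs (x ++ y) ≤ runs x + runs y := by
  have := runs_append x y
  omega

lemma runs_add_runs_le (x y : List α) : runs x + runs y ≤ runs (x ++ y) + 1 := by
  have := runs_append x y
  split_ifs at this <;> omega

lemma runs_replicate (t : ℕ) (c : α) : runs (replicate t c) = min t 1 := by
  induction t with
  | zero => simp
  | succ t ih => cases t <;> simp_all [runs_cons, replicate_succ]

lemma runs_replicate_append {t : ℕ} {c : α} {s : List α} (ht : t ≠ 0) (hc : c ∉ s) :
    runs (replicate t c ++ s) = runs s + 1 := by
  have h := runs_append (replicate t c) s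
  have hhead : s.head? ≠ some c := fun h => hc (mem_of_mem_head? h)
  rw [getLast?_replicate, if_neg ht, if_neg (fun h' => hhead h'.2.symm), runs_replicate,
    min_eq_right (Nat.one_le_iff_ne_zero.2 ht)] at h
  omega

lemma runs_le_length_of_sublist_stretch {L s : List α} {m : ℕ} (hs : s <+ L.stretch m) :
    runs s ≤ L.length := by
  induction L generalizing s with
  | nil => simp_all [stretch]
  | cons c L ih =>
    obtain ⟨s₁, s₂, rfl, h₁, h₂⟩ := sublist_append_iff.1 hs
    obtain ⟨t, -, rfl⟩ := sublist_replicate_iff.1 h₁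
    calc runs (replicate t c ++ s₂) ≤ runs (replicate t c) + runs s₂ := runs_append_le _ _
      _ ≤ 1 + L.length := add_le_add ((runs_replicate t c).trans_le (min_le_right t 1)) (ih h₂)
      _ = (c :: L).length := by simp [add_comm]

lemma length_le_mul_runs_of_sublist_stretch {L s : List α} {m : ℕ} (hL : L.Nodup)
    (hs : s <+ L.stretch m) : s.length ≤ m * runs s := by
  induction L generalizing s with
  | nil => simp_all [stretch]
  | cons c L ih =>
    obtain ⟨s₁, s₂, rfl, h₁, h₂⟩ := sublist_append_iff.1 hs
    obtain ⟨t, ht, rfl⟩ := sublist_replicate_iff.1 h₁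
    have hc : c ∉ s₂ := fun h => (nodup_cons.1 hL).1 (mem_of_mem_stretch (h₂.subset h))
    rcases eq_or_ne t 0 with rfl | ht₀
    · simpa using ih hL.of_cons h₂
    calc (replicate t c ++ s₂).length = t + s₂.length := by simp
      _ ≤ m + m * runs s₂ := add_le_add ht (ih hL.of_cons h₂)
      _ = m * runs (replicate t c ++ s₂) := by rw [runs_replicate_append ht₀ hc]; ring

lemma runs_le_of_sublist_periodic {L s : List α} {m q : ℕ} (hs : s <+ L.periodic m q) :
    runs s ≤ L.length * q := by
  induction q generalizing s with
  | zero => simp_all [periodic]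
  | succ q ih =>
    obtain ⟨s₁, s₂, rfl, h₁, h₂⟩ := sublist_append_iff.1 (periodic_succ L m q ▸ hs)
    calc runs (s₁ ++ s₂) ≤ runs s₁ + runs s₂ := runs_append_le _ _
      _ ≤ L.length + L.length * q :=
        add_le_add (runs_le_length_of_sublist_stretch h₁) (ih h₂)
      _ = L.length * (q + 1) := by ring

lemma length_le_of_sublist_periodic {L s : List α} {m q : ℕ} (hL : L.Nodup)
    (hs : s <+ L.periodic m q) : s.length ≤ m * (q + runs s) := by
  induction q generalizing s with
  | zero => simp_all [periodic]
  | succ q ih =>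
    obtain ⟨s₁, s₂, rfl, h₁, h₂⟩ := sublist_append_iff.1 (periodic_succ L m q ▸ hs)
    calc (s₁ ++ s₂).length = s₁.length + s₂.length := length_append
      _ ≤ m * runs s₁ + m * (q + runs s₂) :=
        add_le_add (length_le_mul_runs_of_sublist_stretch hL h₁) (ih h₂)
      _ = m * (q + (runs s₁ + runs s₂)) := by ring
      _ ≤ m * (q + 1 + runs (s₁ ++ s₂)) := by
        have := runs_add_runs_le s₁ s₂
        exact Nat.mul_le_mul_left m (by omega)

lemma count_stretch (L : List α) (m : ℕ) (x : α) : (L.stretch m).count x = m * L.count x := by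
  induction L with
  | nil => simp [stretch]
  | cons c L ih =>
    rw [stretch_cons, count_append, ih, count_cons, count_replicate]
    split_ifs <;> ring

lemma count_periodic (L : List α) (m q : ℕ) (x : α) :
    (L.periodic m q).count x = q * (m * L.count x) := by
  simp [periodic, count_flatten, count_stretch, sum_replicate]

end Runs

lemma length_le_of_sublist_stretch_of_sublist_reverse [LinearOrder α] {L s : List α} {m : ℕ}
    (hL : L.Pairwise (· < ·)) (h₁ : s <+ L.stretch m) (h₂ : s <+ (L.stretch m).reverse) :
    s.length ≤ m := by
  have hsorted := pairwise_stretch m (hL.imp le_of_lt)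
  have h_le : s.Pairwise (· ≤ ·) := hsorted.sublist h₁
  have h_ge : s.reverse.Pairwise (· ≤ ·) := hsorted.sublist (by simpa using h₂.reverse)
  rw [pairwise_reverse] at h_ge
  cases s with
  | nil => simp
  | cons c t =>
    have h_const : ∀ b ∈ c :: t, c = b := by
      rintro b (_ | ⟨_, hb⟩)
      · rfl
      · exact le_antisymm (rel_of_pairwise_cons h_le hb) (rel_of_pairwise_cons h_ge hb)
    calc (c :: t).length = (c :: t).count c := (count_eq_length.2 h_const).symm
      _ ≤ (L.stretch m).count c := h₁.count_le c
      _ = m * L.count c := count_stretch L m c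
      _ ≤ m :=
        mul_le_of_le_one_right (Nat.zero_le m) (nodup_iff_count_le_one.1 (hL.imp ne_of_lt) c)

end List

open List

section BalancedFamily

variable {k M r : ℕ}

lemma periodicWord_pow (hk : 0 < k) (hM : 0 < M) {i : ℕ} (hi : i ≤ r) :
    periodicWord k (M ^ i) (k * M ^ r / (k * M ^ i)) =
      (finRange k).periodic (M ^ i) (M ^ (r - i)) := by
  rw [Nat.mul_div_mul_left _ _ hk, Nat.pow_div hi hM]
  rfl

lemma length_periodic_pow {i : ℕ} (hi : i ≤ r) :
    ((finRange k).periodic (M ^ i) (M ^ (r - i))).length = k * M ^ r := by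
  rw [length_periodic, length_finRange, ← pow_sub_mul_pow M hi]
  ring

lemma count_periodic_pow {i : ℕ} (hi : i ≤ r) (a : Fin k) :
    ((finRange k).periodic (M ^ i) (M ^ (r - i))).count a = M ^ r := by
  rw [count_periodic, count_eq_one_of_mem (nodup_finRange k) (mem_finRange a), mul_one,
    pow_sub_mul_pow M hi]

lemma length_le_of_sublist_periodic_pow_of_runs_le (hM : 1 ≤ M) {i j : ℕ} (hij : i < j)
    (hj : j ≤ r) {s : List (Fin k)} (hs : s <+ (finRange k).periodic (M ^ i) (M ^ (r - i)))
    (hruns : runs s ≤ k * M ^ (r - j)) : s.length ≤ M ^ r + k * M ^ (r - 1) := by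
  calc s.length ≤ M ^ i * (M ^ (r - i) + runs s) :=
        length_le_of_sublist_periodic (nodup_finRange k) hs
    _ ≤ M ^ i * (M ^ (r - i) + k * M ^ (r - j)) := by gcongr
    _ = M ^ r + k * M ^ (i + (r - j)) := by
        rw [mul_add, ← pow_add, Nat.add_sub_cancel' (hij.le.trans hj), pow_add]
        ring
    _ ≤ M ^ r + k * M ^ (r - 1) := by
        gcongr
        omega

lemma length_le_of_sublist_periodic_pow_of_lt (hM : 1 ≤ M) {i j : ℕ} (hij : i < j) (hj : j ≤ r)
    {s : List (Fin k)} (h₁ : s <+ (finRange k).periodic (M ^ i) (M ^ (r - i)))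
    (h₂ : s <+ (finRange k).periodic (M ^ j) (M ^ (r - j))) :
    s.length ≤ M ^ r + k * M ^ (r - 1) :=
  length_le_of_sublist_periodic_pow_of_runs_le hM hij hj h₁
    (by simpa using runs_le_of_sublist_periodic h₂)

lemma length_le_of_sublist_periodic_pow_of_sublist_reverse (hM : 1 ≤ M) {i : ℕ} (hi : i ≤ r)
    {s : List (Fin k)} (h₁ : s <+ (finRange k).periodic (M ^ i) (M ^ (r - i)))
    (h₂ : s <+ ((finRange k).periodic (M ^ r) (M ^ (r - r))).reverse) :
    s.length ≤ M ^ r + k * M ^ (r - 1) := by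
  rw [Nat.sub_self, pow_zero, periodic_one] at h₂
  rcases hi.lt_or_eq with hi | rfl
  · refine length_le_of_sublist_periodic_pow_of_runs_le hM hi le_rfl h₁ ?_
    rw [reverse_stretch] at h₂
    simpa using runs_le_length_of_sublist_stretch h₂
  · rw [Nat.sub_self, pow_zero, periodic_one] at h₁
    exact (length_le_of_sublist_stretch_of_sublist_reverse (pairwise_lt_finRange k) h₁ h₂).trans
      (Nat.le_add_right _ _)

end BalancedFamily

theorem lcs_upper_bound_balanced_family_general (k r M n : ℕ) (hk : 2 ≤ k) (hM : 1 ≤ M)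
    (hn : n = k * M ^ r)
    (W : Set (List (Fin k)))
    (hW : W = {w | (∃ i ≤ r, w = periodicWord k (M ^ i) (n / (k * M ^ i))) ∨
                   w = (periodicWord k (M ^ r) (n / (k * M ^ r))).reverse}) :
    (∀ w ∈ W, w.length = n ∧ ∀ a : Fin k, w.count a = n / k) ∧
    (∀ u ∈ W, ∀ v ∈ W, u ≠ v →
      ∀ s : List (Fin k), s.Sublist u → s.Sublist v →
        s.length ≤ n / k + k * M ^ (r - 1)) := by
  subst hn hW
  have hk₀ : 0 < k := by omega
  have hw : ∀ i ≤ r, periodicWord k (M ^ i) (k * M ^ r / (k * M ^ i)) =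
      (finRange k).periodic (M ^ i) (M ^ (r - i)) := fun i hi => periodicWord_pow hk₀ hM hi
  rw [Nat.mul_div_cancel_left _ hk₀]
  constructor
  · rintro w (⟨i, hi, rfl⟩ | rfl)
    · rw [hw i hi]
      exact ⟨length_periodic_pow hi, count_periodic_pow hi⟩
    · rw [hw r le_rfl, length_reverse]
      exact ⟨length_periodic_pow le_rfl, fun a => by rw [count_reverse, count_periodic_pow le_rfl]⟩
  · rintro u (⟨i, hi, rfl⟩ | rfl) v (⟨j, hj, rfl⟩ | rfl) hne s hu hv
    · rw [hw i hi] at hu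
      rw [hw j hj] at hv
      rcases lt_trichotomy i j with hij | rfl | hji
      · exact length_le_of_sublist_periodic_pow_of_lt hM hij hj hu hv
      · exact absurd rfl hne
      · exact length_le_of_sublist_periodic_pow_of_lt hM hji hi hv hu
    · rw [hw i hi] at hu
      rw [hw r le_rfl] at hv
      exact length_le_of_sublist_periodic_pow_of_sublist_reverse hM hi hu hv
    · rw [hw r le_rfl] at hu
      rw [hw j hj] at hv
      exact length_le_of_sublist_periodic_pow_of_sublist_reverse hM hj hv hu
    · exact absurd rfl hne

/-- Let `k ≥ 2`, `r ≥ 1`, `M ≥ 1` and `n = k·M^r`.  For `0 ≤ i ≤ r` let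
`m_i = M^i` and `w_i = (1^{m_i} 2^{m_i} ⋯ k^{m_i})^{n/(k·m_i)}`.  Each word of the family
`{w_0, …, w_r, rev(w_r)}` is balanced (every letter occurs exactly `n/k` times), and every
two distinct words of this family have longest common subsequence of length at most
`n/k + k·M^{r-1}` (that is, at most `n/k + k^{1/r}·n^{1-1/r}`). -/
theorem lcs_upper_bound_balanced_family (k r M n : ℕ) (hk : 2 ≤ k) (hr : 1 ≤ r) (hM : 1 ≤ M)
    (hn : n = k * M ^ r)
    (W : Set (List (Fin k)))
    (hW : W = {w | (∃ i ≤ r, w = periodicWord k (M ^ i) (n / (k * M ^ i))) ∨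
                   w = (periodicWord k (M ^ r) (n / (k * M ^ r))).reverse}) :
    (∀ w ∈ W, w.length = n ∧ ∀ a : Fin k, w.count a = n / k) ∧
    (∀ u ∈ W, ∀ v ∈ W, u ≠ v →
      ∀ s : List (Fin k), s.Sublist u → s.Sublist v →
        s.length ≤ n / k + k * M ^ (r - 1)) :=
  lcs_upper_bound_balanced_family_general k r M n hk hM hn W hW
end

section
/- Let k ≥ 2 and let m, M, s, t be positive integers with k·m·s = k·M·t = n and m ≤ M. Let u = (1^m 2^m ⋯ k^m)^s and v = (1^M 2^M ⋯ k^M)^t, and let rev(v) denote the reversal of v. Then LCS(u, v) ≤ n/k + (m/M)·n, and likewise LCS(u, rev(v)) ≤ n/k + (m/M)·n. -/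
namespace List

variable {α : Type*}

theorem getElem?_flatten_of_forall_length_eq {L : List (List α)} {m : ℕ}
    (hL : ∀ l ∈ L, l.length = m) (hm : 0 < m) (i : ℕ) :
    L.flatten[i]? = L[i / m]?.bind (·[i % m]?) := by
  induction L generalizing i with
  | nil => simp
  | cons l L ih =>
    rw [flatten_cons, getElem?_append, hL l mem_cons_self]
    split_ifs with hi
    · simp [Nat.div_eq_of_lt hi, Nat.mod_eq_of_lt hi]
    · rw [ih (fun l' hl' => hL l' (mem_cons_of_mem l hl')),
        Nat.div_eq_sub_div hm (not_lt.mp hi), Nat.mod_eq_sub_mod (not_lt.mp hi)]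
      rfl

theorem getElem?_flatMap_replicate (L : List α) {m : ℕ} (hm : 0 < m) (i : ℕ) :
    (L.flatMap (replicate m ·))[i]? = L[i / m]? := by
  rw [flatMap_def, getElem?_flatten_of_forall_length_eq (by simp) hm, getElem?_map]
  cases L[i / m]? <;> simp [Nat.mod_lt _ hm]

theorem getElem?_flatten_replicate (B : List α) {q i : ℕ} (hi : i < q * B.length) :
    (replicate q B).flatten[i]? = B[i % B.length]? := by
  have hB : 0 < B.length := Nat.pos_of_mul_pos_left (Nat.zero_lt_of_lt hi)
  rw [getElem?_flatten_of_forall_length_eq (by simp) hB, getElem?_replicate_of_lt]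
  · rfl
  · exact Nat.div_lt_of_lt_mul (by rwa [mul_comm])

theorem reverse_flatMap_replicate (L : List α) (m : ℕ) :
    (L.flatMap (replicate m ·)).reverse = L.reverse.flatMap (replicate m ·) := by
  simp [reverse_flatMap, Function.comp_def]

end List

open List

def cyclicWord (k q : ℕ) : List (Fin k) :=
  (replicate q (finRange k)).flatten

theorem length_cyclicWord (k q : ℕ) : (cyclicWord k q).length = q * k := by
  simp [cyclicWord]

theorem getElem?_cyclicWord {k q i : ℕ} (hi : i < q * k) :
    (cyclicWord k q)[i]?.map Fin.val = some (i % k) := by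
  rw [cyclicWord, getElem?_flatten_replicate _ (by simpa using hi)]
  have hk : 0 < k := Nat.pos_of_mul_pos_left (Nat.zero_lt_of_lt hi)
  simp [Nat.mod_lt _ hk]

theorem cyclicWord_add_le_of_getElem?_eq {k q i j : ℕ} (hij : i < j)
    (hj : j < (cyclicWord k q).length) (h : (cyclicWord k q)[i]? = (cyclicWord k q)[j]?) :
    i + k ≤ j := by
  rw [length_cyclicWord] at hj
  have hmod : i % k = j % k := by
    simpa [getElem?_cyclicWord (hij.trans hj), getElem?_cyclicWord hj] using
      congrArg (Option.map Fin.val) h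
  have hdvd : k ∣ j - i := (Nat.modEq_iff_dvd' hij.le).mp hmod
  have := Nat.le_of_dvd (by omega) hdvd
  omega

theorem periodicWord_eq_flatMap (k m q : ℕ) :
    periodicWord k m q = (cyclicWord k q).flatMap (replicate m ·) := by
  rw [periodicWord, cyclicWord, ← flatMap_replicate, flatten_eq_flatMap, flatMap_assoc]
  rfl

def matchPotential (k m x a : ℕ) : ℕ := x + (k - 1) * (m * a + x % m)

theorem matchPotential_add_le {k m x x' a a' : ℕ} (hx : x < x') (ha : a ≤ a')
    (hsep : a = a' → x / m = x' / m ∨ x / m + k ≤ x' / m) :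
    matchPotential k m x a + k ≤ matchPotential k m x' a' := by
  obtain _ | k := k
  · simpa [matchPotential] using hx.le
  simp only [matchPotential, Nat.add_sub_cancel]
  rcases Nat.eq_zero_or_pos m with rfl | hm
  · simp only [zero_mul, Nat.mod_zero, zero_add]
    nlinarith
  have hr := Nat.mod_lt x hm
  have hr' := Nat.mod_lt x' hm
  have hx_eq := Nat.div_add_mod x m
  have hx'_eq := Nat.div_add_mod x' m
  generalize x / m = q, x % m = r, x' / m = q', x' % m = r' at *
  subst hx_eq hx'_eq
  rcases ha.lt_or_eq with ha | rfl
  · have : m * (a + 1) ≤ m * a' := Nat.mul_le_mul_left m ha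
    have : m * a + r + 1 ≤ m * a' + r' := by nlinarith
    nlinarith [Nat.mul_le_mul_left k this]
  · rcases hsep rfl with rfl | hq
    · nlinarith
    · have : m * (q + (k + 1)) ≤ m * q' := Nat.mul_le_mul_left m hq
      nlinarith [Nat.mul_le_mul_left (k + 1) hr]

theorem matchPotential_add_le_of_lt {k m x a n A : ℕ} (hm : 0 < m) (hx : x < n) (ha : a < A) :
    matchPotential k m x a + k ≤ n + (k - 1) * m * A := by
  obtain _ | k := k
  · simpa [matchPotential] using hx.le
  simp only [matchPotential, Nat.add_sub_cancel]
  have hr := Nat.mod_lt x hm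
  generalize x % m = r at *
  have : m * (a + 1) ≤ m * A := Nat.mul_le_mul_left m ha
  have : m * a + r + 1 ≤ m * A := by nlinarith
  nlinarith [Nat.mul_le_mul_left k this]

theorem mul_le_of_forall_add_le {k B : ℕ} : ∀ {N : ℕ} (φ : Fin N → ℕ),
    (∀ i j, i < j → φ i + k ≤ φ j) → (∀ i, φ i + k ≤ B) → k * N ≤ B
  | 0, _, _, _ => by simp
  | N + 1, φ, hgap, hB => by
    have := mul_le_of_forall_add_le (B := φ (Fin.last N)) (φ ∘ Fin.castSucc)
      (fun i j hij => hgap _ _ (Fin.castSucc_lt_castSucc_iff.mpr hij))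
      (fun i => hgap _ _ (Fin.castSucc_lt_last i))
    rw [Nat.mul_succ]
    exact (Nat.add_le_add_right this k).trans (hB _)

theorem mul_length_le_of_sublist_flatMap_replicate {α : Type*} {U W l : List α} {k m M : ℕ}
    (hU : ∀ i j, i < j → j < U.length → U[i]? = U[j]? → i + k ≤ j)
    (hu : l <+ U.flatMap (replicate m ·)) (hw : l <+ W.flatMap (replicate M ·)) :
    k * l.length ≤ m * U.length + (k - 1) * m * W.length := by
  rcases Nat.eq_zero_or_pos m with rfl | hm
  · simp [show l = [] by simpa using hu.length_le]
  rcases Nat.eq_zero_or_pos M with rfl | hM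
  · simp [show l = [] by simpa using hw.length_le]
  obtain ⟨f, hf⟩ := sublist_iff_exists_fin_orderEmbedding_get_eq.mp hu
  obtain ⟨g, hg⟩ := sublist_iff_exists_fin_orderEmbedding_get_eq.mp hw
  have hU_letter (i : Fin l.length) : U[(f i : ℕ) / m]? = some (l.get i) := by
    rw [← getElem?_flatMap_replicate U hm, hf i]; simp
  have hW_letter (i : Fin l.length) : W[(g i : ℕ) / M]? = some (l.get i) := by
    rw [← getElem?_flatMap_replicate W hM, hg i]; simp
  refine mul_le_of_forall_add_le (fun i => matchPotential k m (f i) (g i / M)) ?_ ?_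
  · intro i j hij
    refine matchPotential_add_le (f.lt_iff_lt.mpr hij) (Nat.div_le_div_right (g.monotone hij.le)) ?_
    intro hgij
    have hsame : U[(f i : ℕ) / m]? = U[(f j : ℕ) / m]? := by
      rw [hU_letter, hU_letter, ← hW_letter, ← hW_letter, hgij]
    rcases (Nat.div_le_div_right (c := m) (f.monotone hij.le)).eq_or_lt with heq | hlt
    · exact .inl heq
    · exact .inr (hU _ _ hlt (List.getElem?_eq_some_iff.mp (hU_letter j)).1 hsame)
  · intro i
    refine matchPotential_add_le_of_lt hm ?_ (List.getElem?_eq_some_iff.mp (hW_letter i)).1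
    simpa [mul_comm] using (f i).isLt

theorem mul_length_le_of_sublist_periodicWord {k m s M : ℕ} {W l : List (Fin k)}
    (hu : l <+ periodicWord k m s) (hw : l <+ W.flatMap (replicate M ·)) :
    k * l.length ≤ k * m * s + (k - 1) * m * W.length := by
  rw [periodicWord_eq_flatMap] at hu
  have := mul_length_le_of_sublist_flatMap_replicate
    (fun _ _ => cyclicWord_add_le_of_getElem?_eq) hu hw
  rw [length_cyclicWord] at this
  linarith

theorem lcs_periodic_words_upper_bound_general (k m M s t n : ℕ) (hk : 2 ≤ k)
    (hM : 1 ≤ M)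
    (hms : k * m * s = n) (hMt : k * M * t = n) :
    (∀ l : List (Fin k), l.Sublist (periodicWord k m s) → l.Sublist (periodicWord k M t) →
        (l.length : ℝ) ≤ (n : ℝ) / (k : ℝ) + ((m : ℝ) / (M : ℝ)) * (n : ℝ)) ∧
    (∀ l : List (Fin k), l.Sublist (periodicWord k m s) →
        l.Sublist (periodicWord k M t).reverse →
        (l.length : ℝ) ≤ (n : ℝ) / (k : ℝ) + ((m : ℝ) / (M : ℝ)) * (n : ℝ)) := by
  have hbound (W l : List (Fin k)) (hW : W.length = t * k)
      (hu : l <+ periodicWord k m s) (hw : l <+ W.flatMap (replicate M ·)) :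
      (l.length : ℝ) ≤ n / k + (m / M) * n := by
    have hkl := mul_length_le_of_sublist_periodicWord hu hw
    have hl : k * l.length ≤ k * (m * s + k * m * t) := by
      rw [hW] at hkl
      nlinarith [Nat.mul_le_mul_right (m * (t * k)) (Nat.sub_le k 1)]
    have hnk : (n : ℝ) / k = m * s := by rw [← hms]; push_cast; field_simp
    have hmMn : (m / M : ℝ) * n = k * m * t := by rw [← hMt]; push_cast; field_simp
    rw [hnk, hmMn]
    exact_mod_cast Nat.le_of_mul_le_mul_left hl (by omega)
  refine ⟨fun l hu hv => hbound _ l (length_cyclicWord k t) hu ?_,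
    fun l hu hv => hbound _ l (by rw [length_reverse, length_cyclicWord]) hu ?_⟩
  · rwa [periodicWord_eq_flatMap] at hv
  · rwa [periodicWord_eq_flatMap, reverse_flatMap_replicate] at hv

/-- Let `k ≥ 2` and let `m, M, s, t` be positive integers with
`k·m·s = k·M·t = n` and `m ≤ M`.  Let `u = (1^m 2^m ⋯ k^m)^s` and `v = (1^M 2^M ⋯ k^M)^t`.
Then `LCS(u, v) ≤ n/k + (m/M)·n`, and likewise `LCS(u, rev(v)) ≤ n/k + (m/M)·n`. -/
theorem lcs_periodic_words_upper_bound (k m M s t n : ℕ) (hk : 2 ≤ k)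
    (hm : 1 ≤ m) (hM : 1 ≤ M) (hs : 1 ≤ s) (ht : 1 ≤ t)
    (hms : k * m * s = n) (hMt : k * M * t = n) (hmM : m ≤ M) :
    (∀ l : List (Fin k), l.Sublist (periodicWord k m s) → l.Sublist (periodicWord k M t) →
        (l.length : ℝ) ≤ (n : ℝ) / (k : ℝ) + ((m : ℝ) / (M : ℝ)) * (n : ℝ)) ∧
    (∀ l : List (Fin k), l.Sublist (periodicWord k m s) →
        l.Sublist (periodicWord k M t).reverse →
        (l.length : ℝ) ≤ (n : ℝ) / (k : ℝ) + ((m : ℝ) / (M : ℝ)) * (n : ℝ)) :=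
  lcs_periodic_words_upper_bound_general k m M s t n hk hM hms hMt
end

section
/- Let w be a binary word, let t ≥ 0 be a real number, and index the zeros of w as z_1, z_2, … from left to right. Call the zero z_j t-good if |P(z_j) − j| ≤ t, where P(z_j) is the number of ones of w to the left of z_j. Then every contiguous subword of w that contains exactly N ones contains at most N + 2t + 1 zeros that are t-good. -/
/-!
Let `c` be the number of ones before the subword. A `t`-good zero `z_j` inside it has between
`c` and `c + N` ones to its left, so its index `j` lies in the real interval
`[c - t, c + N + t]` of length `N + 2t`. Distinct zeros have distinct indices, and an interval
of length `L` contains at most `L + 1` integers.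
-/

theorem Set.ncard_le_of_injOn_int_mem_Icc {α : Type*} {s : Set α} {f : α → ℤ} {lo hi : ℝ}
    (hf : s.InjOn f) (hs : ∀ x ∈ s, (f x : ℝ) ∈ Set.Icc lo hi) (hlohi : lo ≤ hi + 1) :
    (s.ncard : ℝ) ≤ hi - lo + 1 := by
  have hsub : f '' s ⊆ (Finset.Icc ⌈lo⌉ ⌊hi⌋ : Set ℤ) := by
    rintro _ ⟨x, hx, rfl⟩
    simpa [Int.ceil_le, Int.le_floor] using hs x hx
  have hcard : s.ncard ≤ (⌊hi⌋ + 1 - ⌈lo⌉).toNat := by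
    rw [← hf.ncard_image, ← Int.card_Icc, ← Set.ncard_coe_finset]
    exact Set.ncard_le_ncard hsub (Finset.finite_toSet _)
  have hfloor_ceil : ((⌊hi⌋ + 1 - ⌈lo⌉ : ℤ) : ℝ) ≤ hi - lo + 1 := by
    push_cast
    linarith [Int.floor_le hi, Int.le_ceil lo]
  calc (s.ncard : ℝ) ≤ ((⌊hi⌋ + 1 - ⌈lo⌉).toNat : ℤ) := by exact_mod_cast hcard
    _ = max ((⌊hi⌋ + 1 - ⌈lo⌉ : ℤ) : ℝ) 0 := by rw [Int.toNat_eq_max]; push_cast; rfl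
    _ ≤ hi - lo + 1 := max_le hfloor_ceil (by linarith)

namespace List

variable {α : Type*} [BEq α] (l : List α) (x : α)

theorem count_take_le_count_take {p q : ℕ} (h : p ≤ q) :
    (l.take p).count x ≤ (l.take q).count x :=
  (take_prefix_take_left h).sublist.count_le x

theorem count_take_add_count_drop_take {a b : ℕ} (h : a ≤ b) :
    (l.take a).count x + ((l.take b).drop a).count x = (l.take b).count x := by
  conv_rhs => rw [← take_append_drop a (l.take b), take_take, min_eq_left h]
  exact (count_append ..).symm

theorem count_take_mem_Icc {a p b : ℕ} (hap : a ≤ p) (hpb : p ≤ b) :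
    (l.take p).count x ∈
      Set.Icc ((l.take a).count x) ((l.take a).count x + ((l.take b).drop a).count x) := by
  rw [l.count_take_add_count_drop_take x (hap.trans hpb)]
  exact ⟨l.count_take_le_count_take x hap, l.count_take_le_count_take x hpb⟩

theorem strictMonoOn_count_take [LawfulBEq α] :
    StrictMonoOn (fun p => (l.take p).count x) {p | l[p]? = some x} := by
  intro p hp q _ hpq
  have hstep : (l.take (p + 1)).count x = (l.take p).count x + 1 := by
    simp [take_add_one, show l[p]? = some x from hp, count_append]
  have := l.count_take_le_count_take x (p := p + 1) hpq
  show (l.take p).count x < (l.take q).count x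
  omega

end List

theorem good_zeros_in_subword_general (w : List Bool) (t : ℝ) (ht : 0 ≤ t)
    (a b N : ℕ)
    (hN : ((w.take b).drop a).count true = N) :
    (({p : ℕ | a ≤ p ∧ p < b ∧ w.getD p true = false ∧
        |((w.take p).count true : ℝ) - (((w.take p).count false : ℝ) + 1)| ≤ t}.ncard : ℝ))
      ≤ (N : ℝ) + 2 * t + 1 := by
  set c := (w.take a).count true
  have hzeros_injOn := Nat.cast_injective (R := ℤ) |>.comp_injOn
    (w.strictMonoOn_count_take false).injOn
  have hzero {p : ℕ} (hp : w.getD p true = false) : w[p]? = some false := by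
    simpa [List.getD_eq_getElem?_getD, Option.getD_eq_iff] using hp
  have hgood_mem : ∀ p ∈ {p : ℕ | a ≤ p ∧ p < b ∧ w.getD p true = false ∧
      |((w.take p).count true : ℝ) - (((w.take p).count false : ℝ) + 1)| ≤ t},
      (((w.take p).count false : ℤ) : ℝ) ∈ Set.Icc (c - 1 - t) (c + N - 1 + t) := by
    rintro p ⟨hap, hpb, -, hgood⟩
    obtain ⟨hones_lower, hones_upper⟩ := w.count_take_mem_Icc true hap hpb.le
    rw [hN] at hones_upper
    have : (c : ℝ) ≤ (w.take p).count true := by exact_mod_cast hones_lower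
    have : ((w.take p).count true : ℝ) ≤ c + N := by exact_mod_cast hones_upper
    rw [abs_le] at hgood
    constructor <;> push_cast <;> linarith
  calc _ ≤ (c + N - 1 + t : ℝ) - (c - 1 - t) + 1 :=
        Set.ncard_le_of_injOn_int_mem_Icc
          (hzeros_injOn.mono fun p hp => hzero hp.2.2.1) hgood_mem (by linarith)
    _ = N + 2 * t + 1 := by ring

/-- Let `w` be a binary word (`false` = zero, `true` = one) and `t ≥ 0`
a real number.  The zero of `w` sitting at position `p` (0-indexed) is the `j`-th zero of
`w` with `j = (number of zeros among the first p symbols) + 1`, and `P(z_j)` is the number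
of ones among the first `p` symbols.  Call it `t`-good if `|P(z_j) - j| ≤ t`.  Then every
contiguous subword of `w` (here, the block of symbols at positions `a ≤ p < b`) that
contains exactly `N` ones contains at most `N + 2t + 1` zeros that are `t`-good. -/
theorem good_zeros_in_subword (w : List Bool) (t : ℝ) (ht : 0 ≤ t)
    (a b N : ℕ) (hab : a ≤ b) (hb : b ≤ w.length)
    (hN : ((w.take b).drop a).count true = N) :
    (({p : ℕ | a ≤ p ∧ p < b ∧ w.getD p true = false ∧
        |((w.take p).count true : ℝ) - (((w.take p).count false : ℝ) + 1)| ≤ t}.ncard : ℝ))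
      ≤ (N : ℝ) + 2 * t + 1 :=
  good_zeros_in_subword_general w t ht a b N hN
end

section
/- Let n be even and let w and w′ be balanced binary words of length n, each with zeros indexed z_1, …, z_{n/2} from left to right. Let j ≥ 1 and let t ≥ 0 be an integer with t ≤ j. If in both w and w′ the number of ones to the left of the j-th zero is at most j − t (both j-th zeros are 'left-bad by t'), then w and w′ have a common subsequence of length at least n/2 + t. Symmetrically, if in both w and w′ the number of ones to the left of the j-th zero is at least j + t, then w and w′ have a common subsequence of length at least n/2 + t. -/
/-- `onesBeforeZero w j` is the number of ones (`true`s) of the binary word `w` strictly to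
the left of the `j`-th zero (`false`) of `w`, zeros being counted from the left starting at
`j = 1`.  (If `w` has fewer than `j` zeros, it is the total number of ones of `w`.) -/
def onesBeforeZero : List Bool → ℕ → ℕ
  | [], _ => 0
  | true :: rest, j => onesBeforeZero rest j + 1
  | false :: rest, j => if j ≤ 1 then 0 else onesBeforeZero rest (j - 1)

/-!
The `j`-th zero splits a word as `u ++ 0 :: v`, where `u` has `j - 1` zeros and
`p = onesBeforeZero w j` ones. In a balanced word of length `n`, both `0^j 1^(n/2 - p)` (the zeros
up to the `j`-th zero, then the ones of `v`) and `1^p 0^(n/2 - j + 1)` (the ones of `u`, then the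
zeros from the `j`-th zero on) are subsequences. So if `p ≤ j - t` in both words,
`0^j 1^(n/2 - j + t)` is common to them, and if `p ≥ j + t` in both, `1^(j + t) 0^(n/2 - j + 1)` is.
-/

open List

theorem exists_eq_append_false_cons_onesBeforeZero (w : List Bool) {j : ℕ} (hj : 1 ≤ j)
    (hjw : j ≤ w.count false) :
    ∃ u v, w = u ++ false :: v ∧ u.count false = j - 1 ∧
      u.count true = onesBeforeZero w j := by
  induction w generalizing j with
  | nil => simp at hjw; omega
  | cons a rest ih =>
    cases a with
    | true =>
      obtain ⟨u, v, rfl, hu0, hu1⟩ := ih hj (by simpa using hjw)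
      exact ⟨true :: u, v, rfl, by simpa using hu0, by simp [onesBeforeZero, hu1]⟩
    | false =>
      rcases eq_or_lt_of_le hj with rfl | hj2
      · exact ⟨[], rest, rfl, rfl, by simp [onesBeforeZero]⟩
      · obtain ⟨u, v, rfl, hu0, hu1⟩ := ih (j := j - 1) (by omega) (by simp at hjw; omega)
        refine ⟨false :: u, v, rfl, by simp [hu0]; omega, ?_⟩
        simp [onesBeforeZero, hu1, show ¬ j ≤ 1 by omega]

theorem replicate_false_append_replicate_true_sublist {w : List Bool} {j k : ℕ} (hj : 1 ≤ j)
    (hjw : j ≤ w.count false) (hk : onesBeforeZero w j + k ≤ w.count true) :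
    (replicate j false ++ replicate k true).Sublist w := by
  obtain ⟨u, v, rfl, hu0, hu1⟩ := exists_eq_append_false_cons_onesBeforeZero w hj hjw
  have hv : k ≤ v.count true := by simp [count_append] at hk; omega
  calc replicate j false ++ replicate k true
      = replicate (j - 1) false ++ false :: replicate k true := by
        obtain ⟨i, rfl⟩ := Nat.exists_eq_add_of_le' hj
        simp [replicate_succ']
    _ <+ u ++ false :: v :=
        (replicate_sublist_iff.mpr hu0.ge).append
          ((replicate_sublist_iff.mpr hv).cons_cons false)

theorem replicate_true_append_replicate_false_sublist {w : List Bool} {j m k : ℕ} (hj : 1 ≤ j)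
    (hjw : j ≤ w.count false) (hm : m ≤ onesBeforeZero w j) (hk : j + k ≤ w.count false + 1) :
    (replicate m true ++ replicate k false).Sublist w := by
  obtain ⟨u, v, rfl, hu0, hu1⟩ := exists_eq_append_false_cons_onesBeforeZero w hj hjw
  have hv : k ≤ (false :: v).count false := by simp [count_append] at hk ⊢; omega
  exact (replicate_sublist_iff.mpr (hu1 ▸ hm)).append
    (replicate_sublist_iff.mpr hv)

theorem bad_zeros_give_long_lcs_general (n : ℕ) (w w' : List Bool)
    (hw : w.length = n ∧ w.count false = n / 2 ∧ w.count true = n / 2)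
    (hw' : w'.length = n ∧ w'.count false = n / 2 ∧ w'.count true = n / 2)
    (j t : ℕ) (hj : 1 ≤ j) (hjn : j ≤ n / 2) (ht : t ≤ j) :
    ((onesBeforeZero w j ≤ j - t ∧ onesBeforeZero w' j ≤ j - t) →
      ∃ s : List Bool, s.Sublist w ∧ s.Sublist w' ∧ n / 2 + t ≤ s.length) ∧
    ((j + t ≤ onesBeforeZero w j ∧ j + t ≤ onesBeforeZero w' j) →
      ∃ s : List Bool, s.Sublist w ∧ s.Sublist w' ∧ n / 2 + t ≤ s.length) := by
  obtain ⟨-, hw0, hw1⟩ := hw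
  obtain ⟨-, hw0', hw1'⟩ := hw'
  constructor
  · rintro ⟨h, h'⟩
    refine ⟨replicate j false ++ replicate (n / 2 - (j - t)) true, ?_, ?_, by simp; omega⟩
    · exact replicate_false_append_replicate_true_sublist hj (by omega) (by omega)
    · exact replicate_false_append_replicate_true_sublist hj (by omega) (by omega)
  · rintro ⟨h, h'⟩
    refine ⟨replicate (j + t) true ++ replicate (n / 2 - j + 1) false, ?_, ?_, by simp; omega⟩
    · exact replicate_true_append_replicate_false_sublist hj (by omega) h (by omega)
    · exact replicate_true_append_replicate_false_sublist hj (by omega) h' (by omega)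

/-- Let `n` be even and let `w, w'` be balanced binary words of length
`n`.  Let `1 ≤ j ≤ n/2` and let `0 ≤ t ≤ j` be an integer.  If in both `w` and `w'` the
number of ones to the left of the `j`-th zero is at most `j - t`, then `w` and `w'` have
a common subsequence of length at least `n/2 + t`; symmetrically, if in both words that
number is at least `j + t`, the same conclusion holds. -/
theorem bad_zeros_give_long_lcs (n : ℕ) (hn : 2 ∣ n) (w w' : List Bool)
    (hw : w.length = n ∧ w.count false = n / 2 ∧ w.count true = n / 2)
    (hw' : w'.length = n ∧ w'.count false = n / 2 ∧ w'.count true = n / 2)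
    (j t : ℕ) (hj : 1 ≤ j) (hjn : j ≤ n / 2) (ht : t ≤ j) :
    ((onesBeforeZero w j ≤ j - t ∧ onesBeforeZero w' j ≤ j - t) →
      ∃ s : List Bool, s.Sublist w ∧ s.Sublist w' ∧ n / 2 + t ≤ s.length) ∧
    ((j + t ≤ onesBeforeZero w j ∧ j + t ≤ onesBeforeZero w' j) →
      ∃ s : List Bool, s.Sublist w ∧ s.Sublist w' ∧ n / 2 + t ≤ s.length) :=
  bad_zeros_give_long_lcs_general n w w' hw hw' j t hj hjn ht
end

section
/- Let A and B be finite sets of integers, let c ≥ 0 be an integer, and let E = {(a,b) ∈ A × B : |a − b| ≤ c}. Suppose that every a ∈ A belongs to at most d pairs of E and every b ∈ B belongs to at most d pairs of E, where d ≥ 1. Then there exist an integer m ≥ |E|/(2d) and pairs (a_1,b_1), …, (a_m,b_m) ∈ E with a_1 < a_2 < ⋯ < a_m and b_1 < b_2 < ⋯ < b_m. -/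
/-!
Greedy argument. The band `|x - y| ≤ c` makes `E` closed under taking corners: if `p, q ∈ E`
with `q.1 ≤ p.1` and `p.2 ≤ q.2`, then `(q.1, p.2) ∈ E`. For the lexicographically least pair
`q` of such a set, this forces every other pair to share a coordinate with `q` or to exceed `q`
in both. At most `2d` pairs are of the first kind, and the pairs exceeding `q` again form a
corner-closed set, so `q` followed by a chain extracted recursively from them is a chain of
length at least `|E| / (2d)`.
-/

open Finset

variable {α β : Type*} [LinearOrder α] [LinearOrder β]

def IsSwapClosed (S : Finset (α × β)) : Prop :=
  ∀ p ∈ S, ∀ q ∈ S, q.1 ≤ p.1 → p.2 ≤ q.2 → (q.1, p.2) ∈ S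

namespace IsSwapClosed

variable {S : Finset (α × β)}

theorem filter_lt (hS : IsSwapClosed S) (q : α × β) :
    IsSwapClosed (S.filter fun p => q.1 < p.1 ∧ q.2 < p.2) := by
  intro p hp r hr h₁ h₂
  simp only [mem_filter] at hp hr ⊢
  exact ⟨hS p hp.1 r hr.1 h₁ h₂, hr.2.1, hp.2.2⟩

theorem eq_or_eq_or_lt_of_forall_toLex_le (hS : IsSwapClosed S) {q p : α × β} (hq : q ∈ S)
    (hmin : ∀ r ∈ S, toLex q ≤ toLex r) (hp : p ∈ S) :
    p.1 = q.1 ∨ p.2 = q.2 ∨ q.1 < p.1 ∧ q.2 < p.2 := by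
  rcases Prod.Lex.toLex_le_toLex.mp (hmin p hp) with h₁ | ⟨h₁, -⟩
  · rcases lt_or_ge q.2 p.2 with h₂ | h₂
    · exact Or.inr (Or.inr ⟨h₁, h₂⟩)
    · have hcorner := hmin _ (hS p hp q hq h₁.le h₂)
      rw [Prod.Lex.toLex_le_toLex] at hcorner
      simp only [lt_irrefl, true_and, false_or] at hcorner
      exact Or.inr (Or.inl (le_antisymm h₂ hcorner))
  · exact Or.inl h₁.symm

theorem card_le_of_forall_toLex_le (hS : IsSwapClosed S) {q : α × β} (hq : q ∈ S)
    (hmin : ∀ r ∈ S, toLex q ≤ toLex r) :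
    #S ≤ #(S.filter fun p => p.1 = q.1) + #(S.filter fun p => p.2 = q.2) +
      #(S.filter fun p => q.1 < p.1 ∧ q.2 < p.2) := by
  have hcover : S ⊆ (S.filter fun p => p.1 = q.1) ∪ (S.filter fun p => p.2 = q.2) ∪
      (S.filter fun p => q.1 < p.1 ∧ q.2 < p.2) := by
    intro p hp
    simp only [mem_union, mem_filter, hp, true_and]
    rcases hS.eq_or_eq_or_lt_of_forall_toLex_le hq hmin hp with h | h | h <;> tauto
  exact (card_le_card hcover).trans <|
    (card_union_le _ _).trans (Nat.add_le_add_right (card_union_le _ _) _)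

theorem exists_strictMono_chain (hS : IsSwapClosed S) {d : ℕ}
    (hrow : ∀ p ∈ S, #(S.filter fun r => r.1 = p.1) ≤ d)
    (hcol : ∀ p ∈ S, #(S.filter fun r => r.2 = p.2) ≤ d) :
    ∃ m : ℕ, #S ≤ 2 * d * m ∧ ∃ f : Fin m → α × β, (∀ i, f i ∈ S) ∧
      StrictMono (fun i => (f i).1) ∧ StrictMono (fun i => (f i).2) := by
  induction S using Finset.strongInduction with
  | H S ih =>
  rcases S.eq_empty_or_nonempty with rfl | hne
  · exact ⟨0, by simp, Fin.elim0, fun i => i.elim0, fun i => i.elim0, fun i => i.elim0⟩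
  obtain ⟨q, hq, hmin⟩ := S.exists_min_image toLex hne
  set S' := S.filter fun p => q.1 < p.1 ∧ q.2 < p.2
  have hS'S : S' ⊂ S := filter_ssubset.mpr ⟨q, hq, by simp⟩
  have hfilter_le {P : α × β → Prop} [DecidablePred P] : #(S'.filter P) ≤ #(S.filter P) :=
    card_le_card (filter_subset_filter _ (filter_subset _ _))
  obtain ⟨m, hm, f, hfS', hf₁, hf₂⟩ := ih S' hS'S (hS.filter_lt q)
    (fun p hp => hfilter_le.trans (hrow p (filter_subset _ _ hp)))
    (fun p hp => hfilter_le.trans (hcol p (filter_subset _ _ hp)))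
  have hfS : ∀ i, f i ∈ S ∧ q.1 < (f i).1 ∧ q.2 < (f i).2 := fun i => mem_filter.mp (hfS' i)
  refine ⟨m + 1, ?_, Fin.cons q f, Fin.cases hq fun i => (hfS i).1, ?_, ?_⟩
  · calc #S ≤ d + d + 2 * d * m := (hS.card_le_of_forall_toLex_le hq hmin).trans <|
          Nat.add_le_add (Nat.add_le_add (hrow q hq) (hcol q hq)) hm
      _ = 2 * d * (m + 1) := by ring
  · rw [← Function.comp_def, Fin.comp_cons]
    exact Fin.strictMono_cons.mpr ⟨fun i => (hfS i).2.1, hf₁⟩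
  · rw [← Function.comp_def, Fin.comp_cons]
    exact Fin.strictMono_cons.mpr ⟨fun i => (hfS i).2.2, hf₂⟩

end IsSwapClosed

theorem isSwapClosed_filter_abs_sub_le (A B : Finset ℤ) (c : ℤ) :
    IsSwapClosed ((A ×ˢ B).filter fun p => |p.1 - p.2| ≤ c) := by
  intro p hp q hq h₁ h₂
  simp only [mem_filter, mem_product, abs_le] at hp hq ⊢
  exact ⟨⟨hq.1.1, hp.1.2⟩, by omega, by omega⟩

theorem monotone_matching_of_close_pairs_general (A B : Finset ℤ) (c : ℤ)
    (d : ℕ) (E : Finset (ℤ × ℤ))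
    (hE : E = (A ×ˢ B).filter fun p => |p.1 - p.2| ≤ c)
    (hA : ∀ a ∈ A, (E.filter fun p => p.1 = a).card ≤ d)
    (hB : ∀ b ∈ B, (E.filter fun p => p.2 = b).card ≤ d) :
    ∃ m : ℕ, (E.card : ℝ) / (2 * (d : ℝ)) ≤ (m : ℝ) ∧
      ∃ f : Fin m → ℤ × ℤ, (∀ i, f i ∈ E) ∧
        StrictMono (fun i => (f i).1) ∧ StrictMono (fun i => (f i).2) := by
  have hmem : ∀ p ∈ E, p.1 ∈ A ∧ p.2 ∈ B := fun p hp => by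
    rw [hE] at hp
    exact mem_product.mp (mem_filter.mp hp).1
  obtain ⟨m, hm, f, hf⟩ := (hE ▸ isSwapClosed_filter_abs_sub_le A B c).exists_strictMono_chain
    (fun p hp => hA _ (hmem p hp).1) (fun p hp => hB _ (hmem p hp).2)
  refine ⟨m, div_le_of_le_mul₀ (by positivity) m.cast_nonneg ?_, f, hf⟩
  rw [mul_comm]
  exact_mod_cast hm

/-- Let `A` and `B` be finite sets of integers, `c ≥ 0` an integer, and
`E = {(a,b) ∈ A × B : |a - b| ≤ c}`.  Suppose every `a ∈ A` belongs to at most `d` pairs of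
`E` and every `b ∈ B` belongs to at most `d` pairs of `E`, where `d ≥ 1`.  Then there exist
an integer `m ≥ |E|/(2d)` and pairs `(a_1,b_1), …, (a_m,b_m) ∈ E` with
`a_1 < a_2 < ⋯ < a_m` and `b_1 < b_2 < ⋯ < b_m`. -/
theorem monotone_matching_of_close_pairs (A B : Finset ℤ) (c : ℤ) (hc : 0 ≤ c)
    (d : ℕ) (hd : 1 ≤ d) (E : Finset (ℤ × ℤ))
    (hE : E = (A ×ˢ B).filter fun p => |p.1 - p.2| ≤ c)
    (hA : ∀ a ∈ A, (E.filter fun p => p.1 = a).card ≤ d)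
    (hB : ∀ b ∈ B, (E.filter fun p => p.2 = b).card ≤ d) :
    ∃ m : ℕ, (E.card : ℝ) / (2 * (d : ℝ)) ≤ (m : ℝ) ∧
      ∃ f : Fin m → ℤ × ℤ, (∀ i, f i ∈ E) ∧
        StrictMono (fun i => (f i).1) ∧ StrictMono (fun i => (f i).2) :=
  monotone_matching_of_close_pairs_general A B c d E hE hA hB
end

section
/- Let n ≥ 2 be even. Among any three balanced binary words of length n (repetitions allowed), some two of them have a common subsequence of length at least n/2 + 1. -/
/-!
Two of the three words start with the same letter `b`. Each of them has all its `n / 2`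
copies of `!b` after that first letter, so `b :: replicate (n / 2) (!b)` is a common
subsequence of both.
-/

lemma List.cons_replicate_sublist_of_head?_eq {α : Type*} [BEq α] [LawfulBEq α] {a c : α}
    {m : ℕ} {l : List α} (hl : l.head? = some a) (hm : m ≤ l.tail.count c) :
    (a :: replicate m c).Sublist l := by
  obtain ⟨t, rfl⟩ := List.head?_eq_some_iff.mp hl
  exact (List.replicate_sublist_iff.mpr hm).cons_cons a

theorem lcs_three_balanced_binary_general (n : ℕ) (hn2 : 2 ≤ n)
    (w : Fin 3 → List Bool)
    (hw : ∀ i, (w i).length = n ∧ (w i).count false = n / 2 ∧ (w i).count true = n / 2) :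
    ∃ i j, i ≠ j ∧ ∃ s : List Bool, s.Sublist (w i) ∧ s.Sublist (w j) ∧
      n / 2 + 1 ≤ s.length := by
  have hhead : ∀ i, ∃ b, (w i).head? = some b := fun i =>
    Option.isSome_iff_exists.mp <| List.isSome_head?.mpr <|
      List.ne_nil_of_length_pos (by rw [(hw i).1]; omega)
  choose b hb using hhead
  obtain ⟨i, j, hij, hbij⟩ := Fintype.exists_ne_map_eq_of_card_lt b (by simp)
  have hcount : ∀ k, n / 2 ≤ (w k).tail.count (!b k) := fun k => by
    obtain ⟨t, ht⟩ := List.head?_eq_some_iff.mp (hb k)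
    have := hw k
    rw [ht] at this
    cases hbk : b k <;> simp_all
  refine ⟨i, j, hij, b i :: List.replicate (n / 2) (!b i), ?_, ?_, by simp⟩
  · exact List.cons_replicate_sublist_of_head?_eq (hb i) (hcount i)
  · rw [hbij]
    exact List.cons_replicate_sublist_of_head?_eq (hb j) (hcount j)

/-- Let `n ≥ 2` be even.  Among any three balanced binary words of length
`n` (repetitions allowed), some two of them have a common subsequence of length at least
`n/2 + 1`.  (A binary word of even length `n` is balanced if it contains exactly `n/2`
zeros (`false`) and `n/2` ones (`true`).) -/
theorem lcs_three_balanced_binary (n : ℕ) (hn2 : 2 ≤ n) (hn : 2 ∣ n)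
    (w : Fin 3 → List Bool)
    (hw : ∀ i, (w i).length = n ∧ (w i).count false = n / 2 ∧ (w i).count true = n / 2) :
    ∃ i j, i ≠ j ∧ ∃ s : List Bool, s.Sublist (w i) ∧ s.Sublist (w j) ∧
      n / 2 + 1 ≤ s.length :=
  lcs_three_balanced_binary_general n hn2 w hw
end
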